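/- arXiv:2202.09883 — 4 statements merged into one kernel-verified Lean document; each statement's English description precedes it below -/
import Mathlib

section
/- Let L ∈ F⟨X⟩^{d×d} be a full linear matrix that is stably associated to a nonconstant polynomial f ∈ F⟨X⟩ (for instance, obtained from f by Higman linearization). Then there exist a unit U ∈ F⟨X⟩^{d×d}, an invertible scalar matrix S ∈ F^{d×d} and an integer r with 0 ≤ r < d such that U·L·S = L' ⊕ I_r, where L' ∈ F⟨X⟩^{(d−r)×(d−r)} is a full right monic linear matrix; moreover, if L is not right monic then r > 0. -/
open Matrix BigOperators

/-- The degree of an element of the free algebra: the maximal length of a word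
with nonzero coefficient. -/
noncomputable def ncDeg {F : Type*} [Field F] {σ : Type*} (f : FreeAlgebra F σ) : ℕ :=
  (((FreeAlgebra.equivMonoidAlgebraFreeMonoid (R := F) (X := σ)) f).coeff.support.sup fun w => FreeMonoid.length w)

/-- A noncommutative polynomial is irreducible if it has degree ≥ 1 and admits no
factorization into two factors of degree ≥ 1. -/
def NCIrred {F : Type*} [Field F] {σ : Type*} (f : FreeAlgebra F σ) : Prop :=
  1 ≤ ncDeg f ∧ ¬ ∃ g h : FreeAlgebra F σ, f = g * h ∧ 1 ≤ ncDeg g ∧ 1 ≤ ncDeg h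

/-- The linear matrix `A0 + ∑ i, A i • x i` with scalar coefficient matrices. -/
noncomputable def linMatrix {F : Type*} [Field F] {σ α β : Type*} [Fintype σ]
    (A0 : Matrix α β F) (A : σ → Matrix α β F) : Matrix α β (FreeAlgebra F σ) :=
  Matrix.of fun j k =>
    algebraMap F (FreeAlgebra F σ) (A0 j k) + ∑ i, A i j k • FreeAlgebra.ι F i

/-- A matrix over the free algebra is a linear matrix if each entry is an affine
linear form. -/
def IsLinearMat {F : Type*} [Field F] {σ α β : Type*} [Fintype σ]
    (M : Matrix α β (FreeAlgebra F σ)) : Prop :=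
  ∃ (A0 : Matrix α β F) (A : σ → Matrix α β F), M = linMatrix A0 A

/-- A square matrix is full if it cannot be written as a product through a smaller
dimension. -/
def IsFullMat {R : Type*} [Semiring R] {α : Type*} [Fintype α]
    (M : Matrix α α R) : Prop :=
  ¬ ∃ (e : ℕ) (_ : e < Fintype.card α)
      (M₁ : Matrix α (Fin e) R) (M₂ : Matrix (Fin e) α R), M = M₁ * M₂

/-- A full non-unit square matrix is an atom if it cannot be written as a product of
two full non-units. -/
def IsMatAtom {R : Type*} [Semiring R] {α : Type*} [Fintype α] [DecidableEq α]
    (M : Matrix α α R) : Prop :=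
  IsFullMat M ∧ ¬ IsUnit M ∧
    ∀ A B : Matrix α α R, M = A * B →
      ¬ (IsFullMat A ∧ ¬ IsUnit A ∧ IsFullMat B ∧ ¬ IsUnit B)

/-- The coefficient family `A` is right monic: `[A_1 A_2 ⋯ ]` has full row rank. -/
def RightMonicCoeffs {F : Type*} [Field F] {σ α : Type*} [Fintype σ] [Fintype α]
    (A : σ → Matrix α α F) : Prop :=
  (Matrix.of fun (j : α) (p : σ × α) => A p.1 j p.2).rank = Fintype.card α

/-- The coefficient family `A` is left monic: the stacked matrix has full column rank. -/
def LeftMonicCoeffs {F : Type*} [Field F] {σ α : Type*} [Fintype σ] [Fintype α]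
    (A : σ → Matrix α α F) : Prop :=
  (Matrix.of fun (p : σ × α) (k : α) => A p.1 p.2 k).rank = Fintype.card α

/-- A right monic linear matrix. -/
def IsRightMonicLinear {F : Type*} [Field F] {σ α : Type*} [Fintype σ] [Fintype α]
    (M : Matrix α α (FreeAlgebra F σ)) : Prop :=
  ∃ (A0 : Matrix α α F) (A : σ → Matrix α α F), M = linMatrix A0 A ∧ RightMonicCoeffs A

/-- A left monic linear matrix. -/
def IsLeftMonicLinear {F : Type*} [Field F] {σ α : Type*} [Fintype σ] [Fintype α]
    (M : Matrix α α (FreeAlgebra F σ)) : Prop :=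
  ∃ (A0 : Matrix α α F) (A : σ → Matrix α α F), M = linMatrix A0 A ∧ LeftMonicCoeffs A

/-- `M ⊕ I_k` : block diagonal with blocks `M` and the `k × k` identity. -/
def oplusId {R : Type*} [Semiring R] {d : ℕ} (M : Matrix (Fin d) (Fin d) R) (k : ℕ) :
    Matrix (Fin (d + k)) (Fin (d + k)) R :=
  Matrix.reindex finSumFinEquiv finSumFinEquiv (Matrix.fromBlocks M 0 0 1)

/-- A polynomial viewed as a `1 × 1` matrix. -/
def toMat1 {R : Type*} (f : R) : Matrix (Fin 1) (Fin 1) R := Matrix.of fun _ _ => f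

/-- Block lower triangular matrix `[[A, 0], [D, B]]`. -/
def lowerBlocks {R : Type*} [Semiring R] {r s : ℕ}
    (A : Matrix (Fin r) (Fin r) R) (D : Matrix (Fin s) (Fin r) R)
    (B : Matrix (Fin s) (Fin s) R) : Matrix (Fin (r + s)) (Fin (r + s)) R :=
  Matrix.reindex finSumFinEquiv finSumFinEquiv (Matrix.fromBlocks A 0 D B)

/-- `A` and `B` are stable associates: `A ⊕ I_t = P (B ⊕ I_t') Q` for units `P, Q`. -/
def StableAssoc {R : Type*} [Semiring R] {d d' : ℕ}
    (A : Matrix (Fin d) (Fin d) R) (B : Matrix (Fin d') (Fin d') R) : Prop :=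
  ∃ (t t' : ℕ), 0 < t ∧ 0 < t' ∧ ∃ (h : d' + t' = d + t),
    ∃ P Q : Matrix (Fin (d + t)) (Fin (d + t)) R, IsUnit P ∧ IsUnit Q ∧
      oplusId A t = P * Matrix.reindex (finCongr h) (finCongr h) (oplusId B t') * Q

/-- The dilated linear matrix `A0 ⊗ I_ℓ + ∑ i, A i ⊗ (Y i + M i)` in the matrix
variables `y_{i,j,k}`. -/
noncomputable def dilate {F : Type*} [Field F] {n d : ℕ}
    (A0 : Matrix (Fin d) (Fin d) F) (A : Fin n → Matrix (Fin d) (Fin d) F) (ℓ : ℕ)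
    (M : Fin n → Matrix (Fin ℓ) (Fin ℓ) F) :
    Matrix (Fin d × Fin ℓ) (Fin d × Fin ℓ) (FreeAlgebra F (Fin n × Fin ℓ × Fin ℓ)) :=
  Matrix.of fun p q =>
    algebraMap F (FreeAlgebra F (Fin n × Fin ℓ × Fin ℓ))
      (A0 p.1 q.1 * (if p.2 = q.2 then 1 else 0) + ∑ i, A i p.1 q.1 * M i p.2 q.2) +
      ∑ i : Fin n, A i p.1 q.1 • FreeAlgebra.ι F (i, p.2, q.2)

/-- The diagonal block of `M` corresponding to the fiber `b ⁻¹ {i}`, reindexed by `Fin`. -/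
noncomputable def diagBlock {R : Type*} {d r : ℕ} (M : Matrix (Fin d) (Fin d) R)
    (b : Fin d → Fin r) (i : Fin r) :
    Matrix (Fin (Fintype.card {j : Fin d // b j = i}))
      (Fin (Fintype.card {j : Fin d // b j = i})) R :=
  Matrix.of fun x y =>
    M ((Fintype.equivFin {j : Fin d // b j = i}).symm x : {j : Fin d // b j = i})
      ((Fintype.equivFin {j : Fin d // b j = i}).symm y : {j : Fin d // b j = i})

/-!
A linear matrix `L = A₀ + ∑ Aᵢ xᵢ` is right monic exactly when no nonzero scalar row vector
annihilates all of `A₁, …, Aₙ`. Let `K` be the space of such vectors. Fullness of `L` forbids a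
nonzero `w ∈ K` with `w A₀ = 0`, so `A₀` maps a basis of `K` to independent vectors. Completing
the basis of `K` to an invertible scalar matrix `T`, and its image under `A₀` to an invertible
`S`, puts `T L S⁻¹` in the block form `[[N₁₁, N₁₂], [0, I]]`. A row operation clears `N₁₂`, and
`N₁₁` is again full and linear but smaller, so induction on the size finishes. The remaining
block is nonempty because a unit is stably associated only to a unit, while a nonconstant
polynomial is not a unit of the free algebra (top-degree coefficients multiply).
-/

section Degree

theorem MonoidAlgebra.coeff_mul_of_length_maximal {R σ : Type*} [Semiring R]
    (p q : MonoidAlgebra R (FreeMonoid σ)) {u v : FreeMonoid σ}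
    (hu : u ∈ p.coeff.support) (hv : v ∈ q.coeff.support)
    (hu_max : ∀ w ∈ p.coeff.support, w.length ≤ u.length)
    (hv_max : ∀ w ∈ q.coeff.support, w.length ≤ v.length) :
    (p * q).coeff (u * v) = p.coeff u * q.coeff v := by
  classical
  rw [MonoidAlgebra.coeff_mul, Finsupp.sum, Finset.sum_eq_single u _ (absurd hu)]
  · rw [Finsupp.sum, Finset.sum_eq_single v _ (absurd hv), if_pos rfl]
    exact fun w _ hne => if_neg fun h => hne (mul_left_cancel h)
  intro w hw hne
  refine Finset.sum_eq_zero fun z hz => if_neg fun h => hne ?_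
  -- the first factor of `w * z = u * v` is at most as long as `u`, the second at most as `v`
  have hlen : w.length = u.length := by
    have := congrArg FreeMonoid.length h
    simp only [FreeMonoid.length_mul] at this
    linarith [hu_max w hw, hv_max z hz]
  exact FreeMonoid.toList.injective (List.append_inj_left (congrArg FreeMonoid.toList h) hlen)

variable {F σ : Type*} [Field F]

theorem ncDeg_one : ncDeg (1 : FreeAlgebra F σ) = 0 := by
  simp [ncDeg, MonoidAlgebra.one_def]

theorem ncDeg_add_ncDeg_le_ncDeg_mul {f g : FreeAlgebra F σ} (hf : f ≠ 0) (hg : g ≠ 0) :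
    ncDeg f + ncDeg g ≤ ncDeg (f * g) := by
  classical
  set Φ := FreeAlgebra.equivMonoidAlgebraFreeMonoid (R := F) (X := σ)
  have hsupp {h : FreeAlgebra F σ} (hh : h ≠ 0) : (Φ h).coeff.support.Nonempty :=
    Finsupp.support_nonempty_iff.mpr fun h0 =>
      hh (Φ.injective (by rw [map_zero]; exact MonoidAlgebra.coeff_eq_zero.mp h0))
  obtain ⟨u, hu, hfu⟩ := Finset.exists_mem_eq_sup _ (hsupp hf) FreeMonoid.length
  obtain ⟨v, hv, hgv⟩ := Finset.exists_mem_eq_sup _ (hsupp hg) FreeMonoid.length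
  have htop := MonoidAlgebra.coeff_mul_of_length_maximal (Φ f) (Φ g) hu hv
    (fun w hw => hfu ▸ Finset.le_sup (f := FreeMonoid.length) hw)
    (fun w hw => hgv ▸ Finset.le_sup (f := FreeMonoid.length) hw)
  have huv : u * v ∈ (Φ (f * g)).coeff.support := by
    rw [Finsupp.mem_support_iff, map_mul Φ, htop]
    exact mul_ne_zero (Finsupp.mem_support_iff.mp hu) (Finsupp.mem_support_iff.mp hv)
  calc ncDeg f + ncDeg g = (u * v).length := by
        simp only [ncDeg, FreeMonoid.length_mul]
        rw [← hfu, ← hgv]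
    _ ≤ ncDeg (f * g) := Finset.le_sup (f := FreeMonoid.length) huv

theorem ncDeg_eq_zero_of_isUnit {f : FreeAlgebra F σ} (hf : IsUnit f) : ncDeg f = 0 := by
  obtain ⟨g, hfg⟩ := hf.exists_right_inv
  have := ncDeg_add_ncDeg_le_ncDeg_mul (left_ne_zero_of_mul_eq_one hfg)
    (right_ne_zero_of_mul_eq_one hfg)
  rw [hfg, ncDeg_one] at this
  omega

end Degree

theorem IsUnit.of_mul_mul_eq_one {M : Type*} [Monoid M] {u a v : M} (hu : IsUnit u)
    (hv : IsUnit v) (h : u * a * v = 1) : IsUnit a := by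
  obtain ⟨u, rfl⟩ := hu
  obtain ⟨v, rfl⟩ := hv
  exact (Units.isUnit_units_mul u a).mp ((Units.isUnit_mul_units _ v).mp (h ▸ isUnit_one))

section Units

variable {R m n : Type*} [Fintype m] [Fintype n] [DecidableEq m] [DecidableEq n]

theorem IsUnit.submatrix_equiv [Semiring R] {A : Matrix m m R} (hA : IsUnit A) (e₁ e₂ : n ≃ m) :
    IsUnit (A.submatrix e₁ e₂) := by
  obtain ⟨u, rfl⟩ := hA
  exact ⟨⟨(u : Matrix m m R).submatrix e₁ e₂, (↑u⁻¹ : Matrix m m R).submatrix e₂ e₁,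
    by rw [submatrix_mul_equiv, u.mul_inv, submatrix_one_equiv],
    by rw [submatrix_mul_equiv, u.inv_mul, submatrix_one_equiv]⟩, rfl⟩

theorem IsUnit.fromBlocks_zero₂₁ [Ring R] {A : Matrix m m R} {D : Matrix n n R} (hA : IsUnit A)
    (hD : IsUnit D) (B : Matrix m n R) : IsUnit (fromBlocks A B 0 D) := by
  obtain ⟨a, rfl⟩ := hA
  obtain ⟨d, rfl⟩ := hD
  refine ⟨⟨fromBlocks (a : Matrix m m R) B 0 d, fromBlocks (↑a⁻¹ : Matrix m m R)
    (-((↑a⁻¹ : Matrix m m R) * B * (↑d⁻¹ : Matrix n n R))) 0 ↑d⁻¹, ?_, ?_⟩, rfl⟩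
  · simp [fromBlocks_multiply, ← Matrix.mul_assoc]
  · simp [fromBlocks_multiply, Matrix.mul_assoc]

theorem Matrix.isUnit_of_isUnit_fromBlocks_zero_zero [Semiring R] {A : Matrix m m R}
    {D : Matrix n n R} (h : IsUnit (fromBlocks A 0 0 D)) : IsUnit A := by
  obtain ⟨u, hu⟩ := h
  have hr := congrArg toBlocks₁₁ u.mul_inv
  have hl := congrArg toBlocks₁₁ u.inv_mul
  rw [← fromBlocks_toBlocks (↑u⁻¹ : Matrix (m ⊕ n) (m ⊕ n) R), hu, fromBlocks_multiply,
    ← fromBlocks_one] at hr hl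
  simp only [Matrix.zero_mul, Matrix.mul_zero, add_zero, toBlocks_fromBlocks₁₁] at hr hl
  exact ⟨⟨A, _, hr, hl⟩, rfl⟩

end Units

theorem isUnit_toMat1_iff {R : Type*} [Semiring R] {f : R} : IsUnit (toMat1 f) ↔ IsUnit f :=
  (MulEquiv.isUnit_map (uniqueRingEquiv (m := Fin 1) (A := R)).toMulEquiv).symm

section StableAssoc

variable {R : Type*} [Ring R]

theorem isUnit_oplusId_iff {d k : ℕ} {M : Matrix (Fin d) (Fin d) R} :
    IsUnit (oplusId M k) ↔ IsUnit M := by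
  refine ⟨fun h => isUnit_of_isUnit_fromBlocks_zero_zero (D := (1 : Matrix (Fin k) (Fin k) R)) ?_,
    fun h => (h.fromBlocks_zero₂₁ isUnit_one 0).submatrix_equiv _ _⟩
  simpa [oplusId, reindex_apply, submatrix_submatrix] using
    h.submatrix_equiv finSumFinEquiv finSumFinEquiv

theorem StableAssoc.isUnit_of_isUnit {d d' : ℕ} {A : Matrix (Fin d) (Fin d) R}
    {B : Matrix (Fin d') (Fin d') R} (h : StableAssoc A B) (hB : IsUnit B) : IsUnit A := by
  obtain ⟨t, t', -, -, h, P, Q, hP, hQ, hA⟩ := h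
  rw [← isUnit_oplusId_iff (k := t), hA, reindex_apply]
  exact (hP.mul ((isUnit_oplusId_iff.mpr hB).submatrix_equiv _ _)).mul hQ

end StableAssoc

section Fullness

variable {R α β γ : Type*} [Fintype α] [Fintype β] [Fintype γ]

theorem not_isFullMat_mul [Semiring R] (h : Fintype.card γ < Fintype.card α) (M₁ : Matrix α γ R)
    (M₂ : Matrix γ α R) : ¬ IsFullMat (M₁ * M₂) := fun hfull =>
  hfull ⟨_, h, M₁.submatrix id (Fintype.equivFin γ).symm,
    M₂.submatrix (Fintype.equivFin γ).symm id, by rw [submatrix_mul_equiv, submatrix_id_id]⟩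

theorem IsFullMat.of_fromBlocks_zero_one [Semiring R] [DecidableEq γ] {A : Matrix β β R}
    {B : Matrix β γ R} (h : IsFullMat (fromBlocks A B 0 (1 : Matrix γ γ R))) : IsFullMat A := by
  rintro ⟨e, he, M₁, M₂, rfl⟩
  refine not_isFullMat_mul (γ := Fin e ⊕ γ) ?_ (fromBlocks M₁ B 0 1)
    (fromBlocks M₂ 0 0 (1 : Matrix γ γ R)) ?_
  · simp only [Fintype.card_sum, Fintype.card_fin] at he ⊢
    omega
  · simpa [fromBlocks_multiply] using h

theorem IsFullMat.of_mul_mul_eq_submatrix [Semiring R] [DecidableEq α] {L P Q : Matrix α α R}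
    {N : Matrix β β R} (hL : IsFullMat L) (hP : IsUnit P) (hQ : IsUnit Q) (ε : α ≃ β)
    (h : P * L * Q = N.submatrix ε ε) : IsFullMat N := by
  rintro ⟨e, he, M₁, M₂, rfl⟩
  obtain ⟨u, rfl⟩ := hP
  obtain ⟨v, rfl⟩ := hQ
  refine not_isFullMat_mul (γ := Fin e) (by simpa [Fintype.card_congr ε] using he)
    ((↑u⁻¹ : Matrix α α R) * M₁.submatrix ε id) (M₂.submatrix id ε * (↑v⁻¹ : Matrix α α R)) ?_
  have hL' : L = (↑u⁻¹ : Matrix α α R) * ((u : Matrix α α R) * L * v) * (↑v⁻¹ : Matrix α α R) := by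
    simp [Matrix.mul_assoc]
  rw [hL', h, submatrix_mul _ _ _ id _ Function.bijective_id] at hL
  simpa only [Matrix.mul_assoc] using hL

theorem not_isFullMat_of_vecMul_eq_zero [Ring R] [DecidableEq α] {M : Matrix α α R}
    {v : α → R} {j : α} (hv : IsUnit (v j)) (h : v ᵥ* M = 0) : ¬ IsFullMat M := by
  obtain ⟨u, hu⟩ := hv
  -- row `j` of `M` is `-(v j)⁻¹ ∑_{k ≠ j} v k • M k`, so `M` factors through its other rows
  let M₁ : Matrix α {k // k ≠ j} R :=
    of fun i k => if i = j then -(↑u⁻¹ * v k) else if i = k then 1 else 0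
  intro hfull
  refine not_isFullMat_mul (Fintype.card_subtype_lt (x := j) (by simp)) M₁
    (M.submatrix Subtype.val id) ?_
  convert hfull using 1
  ext i l
  by_cases hi : i = j
  · subst hi
    have hrow : ∑ k : {k // k ≠ i}, v k * M k l = -(v i * M i l) := by
      have := congrFun h l
      rw [vecMul, dotProduct, Fintype.sum_eq_add_sum_subtype_ne _ i] at this
      exact eq_neg_of_add_eq_zero_right this
    rw [Matrix.mul_apply]
    calc ∑ k : {k // k ≠ i}, M₁ i k * M k l = -(↑u⁻¹ * ∑ k : {k // k ≠ i}, v k * M k l) := by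
          simp [M₁, Finset.mul_sum, mul_assoc]
      _ = M i l := by rw [hrow, ← hu, mul_neg, neg_neg, ← mul_assoc, Units.inv_mul, one_mul]
  · rw [Matrix.mul_apply, Finset.sum_eq_single ⟨i, hi⟩]
    · simp [M₁, hi]
    · rintro k - hk
      simp [M₁, hi, Ne.symm (Subtype.coe_ne_coe.mpr hk)]
    · simp

end Fullness

section LinearAlgebra

variable {F α : Type*} [Field F] [Fintype α]

theorem Matrix.rank_add_finrank_ker_vecMulLinear {β : Type*} [Fintype β] (M : Matrix α β F) :
    M.rank + Module.finrank F (LinearMap.ker M.vecMulLinear) = Fintype.card α := by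
  rw [rank_eq_finrank_span_row, ← range_vecMulLinear, LinearMap.finrank_range_add_finrank_ker,
    Module.finrank_fintype_fun_eq_card]

theorem LinearIndependent.exists_isUnit_row_eq [DecidableEq α] {β ι : Type*} [Fintype β]
    [Fintype ι] {w : ι → α → F} (hw : LinearIndependent F w) (ε : α ≃ β ⊕ ι) :
    ∃ T : Matrix α α F, IsUnit T ∧ ∀ m, T (ε.symm (.inr m)) = w m := by
  obtain ⟨W, hW⟩ := (Submodule.span F (Set.range w)).exists_isCompl
  have hrank : Module.finrank F W = Fintype.card β := by
    have := Submodule.finrank_add_eq_of_isCompl hW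
    rw [finrank_span_eq_card hw, Module.finrank_fintype_fun_eq_card,
      Fintype.card_congr ε, Fintype.card_sum] at this
    omega
  let b := (Module.finBasisOfFinrankEq F W hrank).reindex (Fintype.equivFin β).symm
  have hb : LinearIndependent F (Sum.elim (W.subtype ∘ b) w) :=
    (b.linearIndependent.map' W.subtype W.ker_subtype).sum_type hw <|
      hW.symm.disjoint.mono_left <| Submodule.span_le.mpr <| by
        rintro _ ⟨i, rfl⟩
        exact (b i).2
  refine ⟨Matrix.of fun k => Sum.elim (W.subtype ∘ b) w (ε k),
    linearIndependent_rows_iff_isUnit.mp (hb.comp ε ε.injective), fun m => ?_⟩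
  ext j
  simp

end LinearAlgebra

section LinearMatrices

variable {F σ : Type*} [Field F] [Fintype σ]

theorem map_mul_linMatrix {α β γ : Type*} [Fintype β] (P : Matrix α β F)
    (A0 : Matrix β γ F) (A : σ → Matrix β γ F) :
    P.map (algebraMap F (FreeAlgebra F σ)) * linMatrix A0 A =
      linMatrix (P * A0) (fun i => P * A i) := by
  ext j k
  simp only [Matrix.mul_apply, map_apply, linMatrix, of_apply, mul_add, Finset.mul_sum,
    Algebra.smul_def, ← mul_assoc, ← map_mul, Finset.sum_add_distrib, map_sum, Finset.sum_mul]
  rw [Finset.sum_comm]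

theorem linMatrix_mul_map {α β γ : Type*} [Fintype β] (A0 : Matrix α β F) (A : σ → Matrix α β F)
    (Q : Matrix β γ F) :
    linMatrix A0 A * Q.map (algebraMap F (FreeAlgebra F σ)) =
      linMatrix (A0 * Q) (fun i => A i * Q) := by
  have hcomm (c r : F) (x : FreeAlgebra F σ) :
      c • x * algebraMap F (FreeAlgebra F σ) r = (c * r) • x := by
    rw [smul_mul_assoc, ← Algebra.commutes, ← Algebra.smul_def, smul_smul]
  ext j k
  simp only [Matrix.mul_apply, map_apply, linMatrix, of_apply, add_mul, Finset.sum_mul, hcomm,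
    ← map_mul, Finset.sum_add_distrib, map_sum, Finset.sum_smul]
  rw [Finset.sum_comm]

theorem linMatrix_eq_fromBlocks {β γ : Type*} [DecidableEq β] [DecidableEq γ]
    (B0 : Matrix (β ⊕ γ) (β ⊕ γ) F) (B : σ → Matrix (β ⊕ γ) (β ⊕ γ) F)
    (h0 : ∀ m, B0 (.inr m) = (1 : Matrix (β ⊕ γ) (β ⊕ γ) F) (.inr m))
    (h : ∀ i m, B i (.inr m) = 0) :
    linMatrix B0 B = fromBlocks (linMatrix B0.toBlocks₁₁ fun i => (B i).toBlocks₁₁)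
      (linMatrix B0.toBlocks₁₂ fun i => (B i).toBlocks₁₂) 0 1 := by
  ext (s | m) (t | t)
  · rfl
  · rfl
  · simp [linMatrix, h0, h]
  · simp [linMatrix, h0, h, one_apply]

variable {α : Type*} [Fintype α] [DecidableEq α]

theorem eq_zero_of_vecMul_eq_zero_of_isFullMat {A0 : Matrix α α F} {A : σ → Matrix α α F}
    (hL : IsFullMat (linMatrix A0 A)) {v : α → F} (h0 : v ᵥ* A0 = 0) (h : ∀ i, v ᵥ* A i = 0) :
    v = 0 := by
  by_contra hv
  obtain ⟨j, hj⟩ := Function.ne_iff.mp hv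
  refine not_isFullMat_of_vecMul_eq_zero (v := fun k => algebraMap F (FreeAlgebra F σ) (v k))
    (j := j) (hj.isUnit.map _) ?_ hL
  ext k
  have h0k := congrFun h0 k
  have hk := fun i => congrFun (h i) k
  simp only [vecMul, dotProduct, Pi.zero_apply] at h0k hk
  simp only [vecMul, dotProduct, linMatrix, of_apply, Pi.zero_apply, mul_add, Finset.mul_sum,
    Algebra.smul_def, ← mul_assoc, ← map_mul, Finset.sum_add_distrib, ← map_sum]
  rw [Finset.sum_comm]
  simp only [← Finset.sum_mul, ← map_sum, h0k, hk, map_zero, zero_mul, Finset.sum_const_zero,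
    add_zero]

theorem exists_isUnit_rows_of_not_rightMonicCoeffs {A0 : Matrix α α F} {A : σ → Matrix α α F}
    (hL : IsFullMat (linMatrix A0 A)) (hA : ¬ RightMonicCoeffs A) :
    ∃ (e₀ r₀ : ℕ) (ε : α ≃ Fin e₀ ⊕ Fin r₀) (T S : Matrix α α F), 0 < r₀ ∧ IsUnit T ∧
      IsUnit S ∧ ∀ m, (∀ i, (T * A i) (ε.symm (.inr m)) = 0) ∧
        (T * A0) (ε.symm (.inr m)) = S (ε.symm (.inr m)) := by
  let K := LinearMap.ker (Matrix.of fun (j : α) (p : σ × α) => A p.1 j p.2).vecMulLinear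
  have hmemK {v : α → F} (hv : v ∈ K) (i : σ) : v ᵥ* A i = 0 :=
    funext fun k => congrFun (LinearMap.mem_ker.mp hv) (i, k)
  have hr₀ : 0 < Module.finrank F K := by
    have : _ + Module.finrank F K = _ := rank_add_finrank_ker_vecMulLinear _
    have hA' : (Matrix.of fun (j : α) (p : σ × α) => A p.1 j p.2).rank ≠ Fintype.card α := hA
    omega
  have hcard : Fintype.card α = Fintype.card (Fin (Fintype.card α - Module.finrank F K) ⊕
      Fin (Module.finrank F K)) := by
    have := Submodule.finrank_le K
    rw [Module.finrank_fintype_fun_eq_card] at this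
    simp only [Fintype.card_sum, Fintype.card_fin]
    exact (Nat.sub_add_cancel this).symm
  let ε := Fintype.equivOfCardEq hcard
  let b := Module.finBasis F K
  have hw : LinearIndependent F fun m => (b m : α → F) :=
    b.linearIndependent.map' K.subtype K.ker_subtype
  have hC : LinearIndependent F fun m => (b m : α → F) ᵥ* A0 := by
    refine b.linearIndependent.map' (A0.vecMulLinear ∘ₗ K.subtype) ?_
    rw [LinearMap.ker_eq_bot']
    exact fun v hv => Subtype.ext (eq_zero_of_vecMul_eq_zero_of_isFullMat hL hv (hmemK v.2))
  obtain ⟨T, hT, hTrow⟩ := hw.exists_isUnit_row_eq ε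
  obtain ⟨S, hS, hSrow⟩ := hC.exists_isUnit_row_eq ε
  refine ⟨_, _, ε, T, S, hr₀, hT, hS, fun m => ⟨fun i => ?_, ?_⟩⟩
  · rw [mul_apply_eq_vecMul, hTrow, hmemK (b m).2]
  · rw [mul_apply_eq_vecMul, hTrow, hSrow]

theorem exists_fromBlocks_of_not_rightMonicCoeffs {A0 : Matrix α α F} {A : σ → Matrix α α F}
    (hL : IsFullMat (linMatrix A0 A)) (hA : ¬ RightMonicCoeffs A) :
    ∃ (e₀ r₀ : ℕ) (ε : α ≃ Fin e₀ ⊕ Fin r₀) (P Q : Matrix α α F)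
      (N₁₁ : Matrix (Fin e₀) (Fin e₀) (FreeAlgebra F σ))
      (N₁₂ : Matrix (Fin e₀) (Fin r₀) (FreeAlgebra F σ)),
      0 < r₀ ∧ IsUnit P ∧ IsUnit Q ∧ IsFullMat N₁₁ ∧ IsLinearMat N₁₁ ∧
      P.map (algebraMap F _) * linMatrix A0 A * Q.map (algebraMap F _) =
        (fromBlocks N₁₁ N₁₂ 0 1).submatrix ε ε := by
  obtain ⟨e₀, r₀, ε, T, _, hr₀, hT, ⟨s, rfl⟩, hrows⟩ :=
    exists_isUnit_rows_of_not_rightMonicCoeffs hL hA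
  let B0 := (T * A0 * (↑s⁻¹ : Matrix α α F)).submatrix ε.symm ε.symm
  let B := fun i => (T * A i * (↑s⁻¹ : Matrix α α F)).submatrix ε.symm ε.symm
  have h0 (m) : B0 (.inr m) = (1 : Matrix (Fin e₀ ⊕ Fin r₀) (Fin e₀ ⊕ Fin r₀) F) (.inr m) := by
    rw [← submatrix_one_equiv ε.symm, ← s.mul_inv]
    ext t
    simp only [B0, submatrix_apply]
    rw [mul_apply_eq_vecMul, (hrows m).2, ← mul_apply_eq_vecMul]
  have h (i) (m : Fin r₀) : B i (.inr m) = 0 := by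
    ext t
    simp only [B, submatrix_apply]
    rw [mul_apply_eq_vecMul, (hrows m).1 i, zero_vecMul]
    rfl
  have heq : T.map (algebraMap F (FreeAlgebra F σ)) * linMatrix A0 A *
      (↑s⁻¹ : Matrix α α F).map (algebraMap F _) = (linMatrix B0 B).submatrix ε ε := by
    rw [map_mul_linMatrix, linMatrix_mul_map]
    ext i j
    simp [linMatrix, B0, B]
  rw [linMatrix_eq_fromBlocks B0 B h0 h] at heq
  refine ⟨_, _, ε, T, ↑s⁻¹, _, _, hr₀, hT, s⁻¹.isUnit, ?_, ⟨_, _, rfl⟩, heq⟩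
  exact (IsFullMat.of_mul_mul_eq_submatrix hL (hT.map (algebraMap F _).mapMatrix)
    (s⁻¹.isUnit.map (algebraMap F _).mapMatrix) ε heq).of_fromBlocks_zero_one

end LinearMatrices

section Reduction

theorem fromBlocks_submatrix_fromBlocks_zero_one {R β γ δ ζ η : Type*} [Zero R] [One R]
    [DecidableEq δ] [DecidableEq ζ] [DecidableEq η] (A : Matrix β β R) (π : γ ≃ β ⊕ δ)
    (e : δ ⊕ ζ ≃ η) :
    fromBlocks ((fromBlocks A 0 0 (1 : Matrix δ δ R)).submatrix π π) 0 0 (1 : Matrix ζ ζ R) =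
      (fromBlocks A 0 0 (1 : Matrix η η R)).submatrix
        ((π.sumCongr (.refl ζ)).trans ((Equiv.sumAssoc β δ ζ).trans ((Equiv.refl β).sumCongr e)))
        ((π.sumCongr (.refl ζ)).trans
          ((Equiv.sumAssoc β δ ζ).trans ((Equiv.refl β).sumCongr e))) := by
  ext (i | i) (j | j)
  · rcases hi : π i <;> rcases hj : π j <;> simp [hi, hj, one_apply]
  · rcases hi : π i <;> simp [hi, one_apply]
  · rcases hj : π j <;> simp [hj, one_apply]
  · simp [one_apply]

variable {F σ : Type*} [Field F] [Fintype σ]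

/-- The conclusion of the main theorem, except that the block decomposition of the index set is
an arbitrary `π`, so that reductions of corners can be assembled recursively. -/
def HasRightMonicReduction {α : Type*} [Fintype α] [DecidableEq α]
    (L : Matrix α α (FreeAlgebra F σ)) : Prop :=
  ∃ (e r : ℕ) (π : α ≃ Fin e ⊕ Fin r) (U : Matrix α α (FreeAlgebra F σ)) (S : Matrix α α F)
    (L' : Matrix (Fin e) (Fin e) (FreeAlgebra F σ)),
    IsUnit U ∧ IsUnit S ∧ IsFullMat L' ∧ IsRightMonicLinear L' ∧
    U * L * S.map (algebraMap F _) = (fromBlocks L' 0 0 1).submatrix π π ∧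
    (¬ IsRightMonicLinear L → 0 < r)

theorem hasRightMonicReduction_of_isRightMonicLinear {d : ℕ}
    {L : Matrix (Fin d) (Fin d) (FreeAlgebra F σ)} (hfull : IsFullMat L)
    (hL : IsRightMonicLinear L) : HasRightMonicReduction L :=
  ⟨d, 0, (Equiv.sumEmpty _ _).symm, 1, 1, L, isUnit_one, isUnit_one, hfull, hL,
    by ext i j; simp, fun h => absurd hL h⟩

theorem HasRightMonicReduction.of_eq_submatrix_fromBlocks {α : Type*} [Fintype α]
    [DecidableEq α] {L : Matrix α α (FreeAlgebra F σ)} {e₀ r₀ : ℕ} (ε : α ≃ Fin e₀ ⊕ Fin r₀)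
    {P Q : Matrix α α F} (hP : IsUnit P) (hQ : IsUnit Q)
    {N₁₁ : Matrix (Fin e₀) (Fin e₀) (FreeAlgebra F σ)}
    {N₁₂ : Matrix (Fin e₀) (Fin r₀) (FreeAlgebra F σ)} (hr₀ : 0 < r₀)
    (h : P.map (algebraMap F _) * L * Q.map (algebraMap F _) =
      (fromBlocks N₁₁ N₁₂ 0 1).submatrix ε ε)
    (hN : HasRightMonicReduction N₁₁) : HasRightMonicReduction L := by
  obtain ⟨e, r, π, U, S, L', hU, hS, hfull, hmonic, hUNS, -⟩ := hN
  let G := fromBlocks U (-(U * N₁₂)) 0 (1 : Matrix (Fin r₀) (Fin r₀) (FreeAlgebra F σ))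
  let D := fromBlocks S 0 0 (1 : Matrix (Fin r₀) (Fin r₀) F)
  refine ⟨e, r + r₀, ε.trans <| (π.sumCongr (Equiv.refl _)).trans <|
      (Equiv.sumAssoc _ _ _).trans ((Equiv.refl _).sumCongr finSumFinEquiv),
    G.submatrix ε ε * P.map (algebraMap F _), Q * D.submatrix ε ε, L',
    ((hU.fromBlocks_zero₂₁ isUnit_one _).submatrix_equiv ε ε).mul
      (hP.map (algebraMap F _).mapMatrix),
    hQ.mul ((hS.fromBlocks_zero₂₁ isUnit_one 0).submatrix_equiv ε ε), hfull, hmonic, ?_,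
    fun _ => by omega⟩
  have hGND : G * fromBlocks N₁₁ N₁₂ 0 1 * D.map (algebraMap F _) =
      fromBlocks (U * N₁₁ * S.map (algebraMap F _)) 0 0 1 := by
    simp [G, D, fromBlocks_map, fromBlocks_multiply, Matrix.mul_assoc]
  calc G.submatrix ε ε * P.map (algebraMap F _) * L * (Q * D.submatrix ε ε).map (algebraMap F _)
      = G.submatrix ε ε * (P.map (algebraMap F _) * L * Q.map (algebraMap F _)) *
          (D.map (algebraMap F _)).submatrix ε ε := by
        rw [Matrix.map_mul, ← submatrix_map]
        simp only [Matrix.mul_assoc]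
    _ = (G * fromBlocks N₁₁ N₁₂ 0 (1 : Matrix (Fin r₀) (Fin r₀) _) *
          D.map (algebraMap F _)).submatrix ε ε := by
        rw [h, submatrix_mul_equiv, submatrix_mul_equiv]
    _ = _ := by
        rw [hGND, hUNS, fromBlocks_submatrix_fromBlocks_zero_one L' π finSumFinEquiv,
          submatrix_submatrix]
        rfl

theorem hasRightMonicReduction_of_isFullMat {d : ℕ}
    {L : Matrix (Fin d) (Fin d) (FreeAlgebra F σ)} (hfull : IsFullMat L) (hlin : IsLinearMat L) :
    HasRightMonicReduction L := by
  induction d using Nat.strong_induction_on with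
  | _ d ih =>
  obtain ⟨A0, A, rfl⟩ := hlin
  by_cases hA : RightMonicCoeffs A
  · exact hasRightMonicReduction_of_isRightMonicLinear hfull ⟨A0, A, rfl, hA⟩
  obtain ⟨e₀, r₀, ε, P, Q, N₁₁, N₁₂, hr₀, hP, hQ, hfull₁₁, hlin₁₁, h⟩ :=
    exists_fromBlocks_of_not_rightMonicCoeffs hfull hA
  have he₀ : e₀ < d := by
    have := Fintype.card_congr ε
    simp only [Fintype.card_fin, Fintype.card_sum] at this
    omega
  exact .of_eq_submatrix_fromBlocks ε hP hQ hr₀ h (ih e₀ he₀ hfull₁₁ hlin₁₁)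

end Reduction

/-- a full linear matrix stably associated to a nonconstant polynomial can
be brought, by a unit `U` on the left and an invertible scalar matrix `S` on the right,
to the form `L' ⊕ I_r` with `L'` a full right monic linear matrix and `r < d`; moreover
`r > 0` when `L` is not right monic. -/
theorem full_to_right_monic {F : Type*} [Field F] {n d : ℕ}
    (L : Matrix (Fin d) (Fin d) (FreeAlgebra F (Fin n)))
    (hfull : IsFullMat L) (hlin : IsLinearMat L)
    (f : FreeAlgebra F (Fin n)) (hdeg : 1 ≤ ncDeg f)
    (hassoc : StableAssoc (toMat1 f) L) :
    ∃ (e r : ℕ) (heq : e + r = d)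
      (U : Matrix (Fin d) (Fin d) (FreeAlgebra F (Fin n)))
      (S : Matrix (Fin d) (Fin d) F)
      (L' : Matrix (Fin e) (Fin e) (FreeAlgebra F (Fin n))),
      0 < e ∧ IsUnit U ∧ IsUnit S ∧ IsFullMat L' ∧ IsRightMonicLinear L' ∧
      U * L * S.map (algebraMap F (FreeAlgebra F (Fin n))) =
        Matrix.reindex (finCongr heq) (finCongr heq) (oplusId L' r) ∧
      (¬ IsRightMonicLinear L → 0 < r) := by
  have hL : ¬ IsUnit L := fun hL => by
    have := ncDeg_eq_zero_of_isUnit (isUnit_toMat1_iff.mp (hassoc.isUnit_of_isUnit hL))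
    omega
  obtain ⟨e, r, π, U, S, L', hU, hS, hL'full, hL'monic, hUS, hr⟩ :=
    hasRightMonicReduction_of_isFullMat hfull hlin
  have heq : e + r = d := by simpa using (Fintype.card_congr π).symm
  have he : 0 < e := Nat.pos_of_ne_zero fun he => by
    subst he
    rw [Subsingleton.elim L' 1, fromBlocks_one, submatrix_one_equiv] at hUS
    exact hL (hU.of_mul_mul_eq_one (hS.map (algebraMap F _).mapMatrix) hUS)
  let τ : Fin d ≃ Fin d := (finCongr heq).symm.trans (finSumFinEquiv.symm.trans π.symm)
  refine ⟨e, r, heq, U.submatrix τ id, S.submatrix id τ, L', he, hU.submatrix_equiv τ (.refl _),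
    hS.submatrix_equiv (.refl _) τ, hL'full, hL'monic, ?_, hr⟩
  calc U.submatrix τ id * L * (S.submatrix id τ).map (algebraMap F _)
      = (U * L * S.map (algebraMap F _)).submatrix τ τ := by
        ext i j
        simp [Matrix.mul_apply]
    _ = _ := by
        rw [hUS, submatrix_submatrix]
        ext i j
        simp [τ, oplusId, reindex_apply]
end

section
/- (Matrix Product Trivialization) Let A ∈ F⟨X⟩^{m×n} and B ∈ F⟨X⟩^{n×s} be matrices of polynomials such that A·B = 0. Then there exists a unit P ∈ F⟨X⟩^{n×n} such that for every index i ∈ [n], either the i-th column of the product A·P is all zeros or the i-th row of the product P^{−1}·B is all zeros. -/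
open Matrix BigOperators

/-!
Order the words of a free monoid by shortlex, encoded by the natural number `shortlexRank`:
every nonzero `f` has a leading word `lw f`, and leading words multiply. Encode column `i` of
`A` as `fᵢ = ∑ⱼ tⱼ Aⱼᵢ` and row `i` of `B` as `gᵢ = ∑ₗ Bᵢₗ uₗ` with fresh letters `t`, `u`, so
that `A * B = 0` becomes `∑ᵢ fᵢ gᵢ = 0`. If some `fᵢ gᵢ ≠ 0`, the leading term of such a product
with the largest leading word cancels against some `fⱼ gⱼ`, `j ≠ i`, with the same leading word.
The free monoid being equidivisible, up to swapping `i` and `j` this gives `lw fᵢ = lw fⱼ · u`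
and `lw gⱼ = u · lw gᵢ`, where `u` involves only the original variables since `lw fᵢ` and
`lw fⱼ` both start with a single letter `t`. The column operation `colᵢ ← colᵢ - colⱼ · c u`
and the inverse row operation `rowⱼ ← rowⱼ + c u · rowᵢ` remove the leading term of `fᵢ`
without raising that of `gⱼ`, so `∑ᵢ weight (fᵢ gᵢ)` drops. Once every `fᵢ gᵢ` vanishes,
column `i` of `A P` or row `i` of `P⁻¹ B` is zero for each `i`.
-/

namespace FreeMonoid

variable {α β : Type*}

theorem exists_eq_mul_of_mul_eq_mul {a b c d : FreeMonoid α} (h : a * b = c * d) :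
    ∃ u, (a = c * u ∧ d = u * b) ∨ (c = a * u ∧ b = u * d) := by
  rcases List.append_eq_append_iff.1 (congrArg toList h) with ⟨u, hc, hb⟩ | ⟨u, ha, hd⟩
  · exact ⟨ofList u, Or.inr ⟨toList.injective hc, toList.injective hb⟩⟩
  · exact ⟨ofList u, Or.inl ⟨toList.injective ha, toList.injective hd⟩⟩

theorem exists_map_eq_of_map_eq_mul {f : α → β} {w : FreeMonoid α} {v u : FreeMonoid β}
    (h : map f w = v * u) : ∃ u₀, map f u₀ = u := by
  obtain ⟨-, l, -, -, hl⟩ := List.map_eq_append_iff.1 (congrArg toList h)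
  exact ⟨ofList l, toList.injective hl⟩

theorem map_injective {f : α → β} (hf : Function.Injective f) :
    Function.Injective (map f) := fun _ _ h =>
  toList.injective (List.map_injective_iff.2 hf (congrArg toList h))

theorem of_mul_inj {a b : α} {x y : FreeMonoid α} : of a * x = of b * y ↔ a = b ∧ x = y := by
  rw [← toList.apply_eq_iff_eq]
  simp

theorem mul_of_inj {a b : α} {x y : FreeMonoid α} : x * of a = y * of b ↔ x = y ∧ a = b := by
  rw [← toList.apply_eq_iff_eq]
  simp

end FreeMonoid

section ShortlexRank

variable {α : Type*} [Fintype α]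

-- `shortlexRank w` is the base `|α| + 2` numeral with digits `1, …, |α|` spelling `w`, last
-- letter least significant: comparing ranks compares words in shortlex order.
noncomputable def shortlexDigits (w : FreeMonoid α) : List ℕ :=
  (w.toList.map fun a => (Fintype.equivFin α a : ℕ) + 1).reverse

noncomputable def shortlexRank (w : FreeMonoid α) : ℕ :=
  Nat.ofDigits (Fintype.card α + 2) (shortlexDigits w)

theorem length_shortlexDigits (w : FreeMonoid α) : (shortlexDigits w).length = w.length := by
  simp [shortlexDigits, FreeMonoid.length]

theorem mem_shortlexDigits {w : FreeMonoid α} {d : ℕ} (hd : d ∈ shortlexDigits w) :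
    0 < d ∧ d < Fintype.card α + 2 := by
  simp only [shortlexDigits, List.mem_reverse, List.mem_map] at hd
  obtain ⟨a, -, rfl⟩ := hd
  have := (Fintype.equivFin α a).isLt
  omega

theorem digits_shortlexRank (w : FreeMonoid α) :
    Nat.digits (Fintype.card α + 2) (shortlexRank w) = shortlexDigits w :=
  Nat.digits_ofDigits _ (by omega) _ (fun _ hd => (mem_shortlexDigits hd).2)
    fun hne => (mem_shortlexDigits (List.getLast_mem hne)).1.ne'

theorem shortlexRank_injective : Function.Injective (shortlexRank (α := α)) := by
  intro u v h
  have hd := congrArg (Nat.digits (Fintype.card α + 2)) h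
  rw [digits_shortlexRank, digits_shortlexRank, shortlexDigits, shortlexDigits,
    List.reverse_inj] at hd
  exact FreeMonoid.toList.injective <|
    List.map_injective_iff.2 (fun _ _ hab => (Fintype.equivFin α).injective (Fin.ext (by omega))) hd

theorem length_le_of_shortlexRank_le {v v' : FreeMonoid α}
    (h : shortlexRank v ≤ shortlexRank v') : v.length ≤ v'.length := by
  simpa only [digits_shortlexRank, length_shortlexDigits] using
    Nat.le_length_digits_le (Fintype.card α + 2) _ _ h

theorem shortlexRank_mul (u v : FreeMonoid α) :
    shortlexRank (u * v) =
      shortlexRank v + (Fintype.card α + 2) ^ v.length * shortlexRank u := by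
  rw [shortlexRank, shortlexDigits, FreeMonoid.toList_mul, List.map_append, List.reverse_append,
    Nat.ofDigits_append, ← shortlexDigits, ← shortlexDigits, length_shortlexDigits]
  rfl

theorem shortlexRank_mul_lt_mul_right {u u' : FreeMonoid α} (h : shortlexRank u < shortlexRank u')
    (w : FreeMonoid α) : shortlexRank (u * w) < shortlexRank (u' * w) := by
  rw [shortlexRank_mul, shortlexRank_mul]
  gcongr

theorem shortlexRank_mul_lt_mul_left {v v' : FreeMonoid α} (h : shortlexRank v < shortlexRank v')
    (w : FreeMonoid α) : shortlexRank (w * v) < shortlexRank (w * v') := by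
  rcases (length_le_of_shortlexRank_le h.le).eq_or_lt with hl | hl
  · rw [shortlexRank_mul, shortlexRank_mul, hl]
    omega
  · by_contra! h'
    have := length_le_of_shortlexRank_le h'
    rw [FreeMonoid.length_mul, FreeMonoid.length_mul] at this
    omega

theorem shortlexRank_mul_le_mul_right {u u' : FreeMonoid α} (h : shortlexRank u ≤ shortlexRank u')
    (w : FreeMonoid α) : shortlexRank (u * w) ≤ shortlexRank (u' * w) := by
  rcases h.eq_or_lt with h | h
  · rw [shortlexRank_injective h]
  · exact (shortlexRank_mul_lt_mul_right h w).le

theorem shortlexRank_mul_le_mul_left {v v' : FreeMonoid α} (h : shortlexRank v ≤ shortlexRank v')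
    (w : FreeMonoid α) : shortlexRank (w * v) ≤ shortlexRank (w * v') := by
  rcases h.eq_or_lt with h | h
  · rw [shortlexRank_injective h]
  · exact (shortlexRank_mul_lt_mul_left h w).le

end ShortlexRank

namespace Matrix

section Semiring

variable {n R : Type*} [Fintype n] [DecidableEq n] [Semiring R]

theorem vecMul_one_add_single (v : n → R) (i j : n) (c : R) :
    v ᵥ* (1 + single j i c) = v + Pi.single i (v j * c) := by
  rw [vecMul_add, vecMul_one]
  ext k
  rcases eq_or_ne k i with rfl | hk
  · simp [vecMul, dotProduct, single]
  · simp [vecMul, dotProduct, single, hk, Ne.symm hk]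

theorem one_add_single_mulVec (v : n → R) (i j : n) (c : R) :
    (1 + single j i c) *ᵥ v = v + Pi.single j (c * v i) := by
  rw [add_mulVec, one_mulVec, single_mulVec]
  rfl

end Semiring

theorem one_add_single_mul_one_add_single_neg {n R : Type*} [Fintype n] [DecidableEq n] [Ring R]
    {i j : n} (hij : i ≠ j) (c : R) :
    (1 + single j i c) * (1 + single j i (-c)) = 1 := by
  rw [mul_add, mul_one, add_mul, one_mul, single_mul_single_of_ne _ _ _ _ hij, add_zero,
    add_assoc, ← single_add, add_neg_cancel, single_zero, add_zero]

variable {R : Type*} [Semiring R] {m n s : Type*} [Fintype n] [DecidableEq n]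

def Trivializable (A : Matrix m n R) (B : Matrix n s R) : Prop :=
  ∃ P V : Matrix n n R, P * V = 1 ∧ V * P = 1 ∧
    ∀ i, (∀ j, (A * P) j i = 0) ∨ (∀ j, (V * B) i j = 0)

namespace Trivializable

variable {A : Matrix m n R} {B : Matrix n s R}

theorem of_forall (h : ∀ i, (∀ j, A j i = 0) ∨ (∀ j, B i j = 0)) : Trivializable A B :=
  ⟨1, 1, Matrix.mul_one 1, Matrix.mul_one 1, by simpa using h⟩

theorem of_mul_mul {M M' : Matrix n n R} (hMM' : M * M' = 1) (hM'M : M' * M = 1)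
    (h : Trivializable (A * M) (M' * B)) : Trivializable A B := by
  obtain ⟨P, V, hPV, hVP, hAB⟩ := h
  refine ⟨M * P, V * M', ?_, ?_, by simpa only [Matrix.mul_assoc] using hAB⟩
  · rw [Matrix.mul_assoc, ← Matrix.mul_assoc P, hPV, Matrix.one_mul, hMM']
  · rw [Matrix.mul_assoc, ← Matrix.mul_assoc M', hM'M, Matrix.one_mul, hVP]

theorem map {S : Type*} [Semiring S] (e : R ≃+* S) (h : Trivializable A B) :
    Trivializable (A.map e) (B.map e) := by
  obtain ⟨P, V, hPV, hVP, hAB⟩ := h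
  refine ⟨P.map e, V.map e, ?_, ?_, fun i => ?_⟩
  · rw [← Matrix.map_mul, hPV, Matrix.map_one _ (map_zero e) (map_one e)]
  · rw [← Matrix.map_mul, hVP, Matrix.map_one _ (map_zero e) (map_one e)]
  · simpa [← Matrix.map_mul] using hAB i

end Trivializable

end Matrix

namespace MonoidAlgebra

section LeadingWord

variable {F α : Type*} [Fintype α]

section Semiring

variable [Semiring F] {f g : MonoidAlgebra F (FreeMonoid α)}

noncomputable def leadingWord (f : MonoidAlgebra F (FreeMonoid α)) : FreeMonoid α :=
  if h : f.coeff.support.Nonempty then (f.coeff.support.exists_max_image shortlexRank h).choose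
  else 1

theorem leadingWord_mem_support (hf : f ≠ 0) : leadingWord f ∈ f.coeff.support := by
  have h : f.coeff.support.Nonempty := Finsupp.support_nonempty_iff.2 (coeff_eq_zero.not.2 hf)
  rw [leadingWord, dif_pos h]
  exact (f.coeff.support.exists_max_image shortlexRank h).choose_spec.1

theorem shortlexRank_le_of_mem_support {w : FreeMonoid α} (hw : w ∈ f.coeff.support) :
    shortlexRank w ≤ shortlexRank (leadingWord f) := by
  have h : f.coeff.support.Nonempty := ⟨w, hw⟩
  rw [leadingWord, dif_pos h]
  exact (f.coeff.support.exists_max_image shortlexRank h).choose_spec.2 w hw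

theorem shortlexRank_le_of_mem_support_mul {w : FreeMonoid α} (hw : w ∈ (f * g).coeff.support) :
    shortlexRank w ≤ shortlexRank (leadingWord f * leadingWord g) := by
  classical
  obtain ⟨a, ha, b, hb, rfl⟩ := Finset.mem_mul.1 (support_coeff_mul_subset f g hw)
  calc shortlexRank (a * b) ≤ shortlexRank (leadingWord f * b) :=
        shortlexRank_mul_le_mul_right (shortlexRank_le_of_mem_support ha) b
    _ ≤ shortlexRank (leadingWord f * leadingWord g) :=
        shortlexRank_mul_le_mul_left (shortlexRank_le_of_mem_support hb) _

theorem coeff_mul_leadingWord (f g : MonoidAlgebra F (FreeMonoid α)) :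
    (f * g).coeff (leadingWord f * leadingWord g) =
      f.coeff (leadingWord f) * g.coeff (leadingWord g) := by
  refine coeff_mul_mul_of_uniqueMul fun a b ha hb hab => ?_
  have ha' : a = leadingWord f := by
    by_contra hne
    have hlt := lt_of_le_of_ne (shortlexRank_le_of_mem_support ha) (shortlexRank_injective.ne hne)
    have := calc shortlexRank (a * b) ≤ shortlexRank (a * leadingWord g) :=
          shortlexRank_mul_le_mul_left (shortlexRank_le_of_mem_support hb) a
      _ < shortlexRank (leadingWord f * leadingWord g) := shortlexRank_mul_lt_mul_right hlt _
    exact this.ne (congrArg shortlexRank hab)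
  subst ha'
  exact ⟨rfl, mul_left_cancel hab⟩

noncomputable def weight (f : MonoidAlgebra F (FreeMonoid α)) : ℕ :=
  f.coeff.support.sup fun w => shortlexRank w + 1

@[simp]
theorem weight_zero : weight (0 : MonoidAlgebra F (FreeMonoid α)) = 0 := rfl

noncomputable def pairWeight {ι : Type*} [Fintype ι]
    (f g : ι → MonoidAlgebra F (FreeMonoid α)) : ℕ :=
  ∑ i, weight (f i * g i)

theorem weight_of_ne_zero (hf : f ≠ 0) : weight f = shortlexRank (leadingWord f) + 1 :=
  le_antisymm (Finset.sup_le fun _ hw => by have := shortlexRank_le_of_mem_support hw; omega)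
    (Finset.le_sup (f := fun w => shortlexRank w + 1) (leadingWord_mem_support hf))

theorem exists_ne_leadingWord_eq_of_sum_eq_zero {ι : Type*} [Fintype ι]
    {x : ι → MonoidAlgebra F (FreeMonoid α)} (h : ∑ i, x i = 0) {i₀ : ι} (hi₀ : x i₀ ≠ 0) :
    ∃ i j, i ≠ j ∧ x i ≠ 0 ∧ x j ≠ 0 ∧ leadingWord (x i) = leadingWord (x j) := by
  obtain ⟨i, -, hmax⟩ :=
    Finset.univ.exists_max_image (fun i => weight (x i)) ⟨i₀, Finset.mem_univ _⟩
  have hxi : x i ≠ 0 := by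
    intro h0
    have := hmax i₀ (Finset.mem_univ _)
    rw [h0, weight_zero, weight_of_ne_zero hi₀] at this
    omega
  -- the leading term of a summand of maximal weight has to be cancelled by another summand
  obtain ⟨j, hji, hj⟩ : ∃ j, j ≠ i ∧ (x j).coeff (leadingWord (x i)) ≠ 0 := by
    by_contra! hall
    have hsum := congrArg (fun y => y.coeff (leadingWord (x i))) h
    simp only [coeff_sum, Finsupp.finsetSum_apply, coeff_zero, Finsupp.coe_zero,
      Pi.zero_apply] at hsum
    rw [Finset.sum_eq_single i (fun j _ hj => hall j hj) (by simp)] at hsum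
    exact Finsupp.mem_support_iff.1 (leadingWord_mem_support hxi) hsum
  have hxj : x j ≠ 0 := by
    rintro h0
    simp [h0] at hj
  refine ⟨j, i, hji, hxj, hxi, shortlexRank_injective (le_antisymm ?_ ?_)⟩
  · have := hmax j (Finset.mem_univ _)
    rw [weight_of_ne_zero hxj, weight_of_ne_zero hxi] at this
    omega
  · exact shortlexRank_le_of_mem_support (Finsupp.mem_support_iff.2 hj)

theorem shortlexRank_le_of_mem_support_add_single_mul {u : FreeMonoid α}
    (hu : leadingWord g = u * leadingWord f) (c : F) {w : FreeMonoid α}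
    (hw : w ∈ (g + single u c * f).coeff.support) :
    shortlexRank w ≤ shortlexRank (leadingWord g) := by
  classical
  rcases Finset.mem_union.1 (Finsupp.support_add hw) with hw | hw
  · exact shortlexRank_le_of_mem_support hw
  · obtain ⟨b, hb, rfl⟩ := Finset.mem_image.1 (support_coeff_single_mul_subset f c u hw)
    exact hu ▸ shortlexRank_mul_le_mul_left (shortlexRank_le_of_mem_support hb) u

end Semiring

section Ring

variable [Ring F] {f g : MonoidAlgebra F (FreeMonoid α)}

theorem shortlexRank_lt_of_mem_support_sub_mul_single {u : FreeMonoid α}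
    (hu : leadingWord f = leadingWord g * u) {c : F}
    (hc : g.coeff (leadingWord g) * c = f.coeff (leadingWord f)) {w : FreeMonoid α}
    (hw : w ∈ (f - g * single u c).coeff.support) :
    shortlexRank w < shortlexRank (leadingWord f) := by
  classical
  have hle : shortlexRank w ≤ shortlexRank (leadingWord f) := by
    rcases Finset.mem_union.1 (Finsupp.support_sub hw) with hw | hw
    · exact shortlexRank_le_of_mem_support hw
    · obtain ⟨a, ha, rfl⟩ := Finset.mem_image.1 (support_coeff_mul_single_subset g c u hw)
      exact hu ▸ shortlexRank_mul_le_mul_right (shortlexRank_le_of_mem_support ha) u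
  refine lt_of_le_of_ne hle (shortlexRank_injective.ne ?_)
  rintro rfl
  have hcoeff : (g * single u c).coeff (leadingWord f) = g.coeff (leadingWord g) * c := by
    rw [hu]
    exact coeff_mul_single_eq_coeff_mul _ fun _ _ => mul_left_inj _
  rw [Finsupp.mem_support_iff, coeff_sub, Finsupp.sub_apply, hcoeff, hc, sub_self] at hw
  exact hw rfl

end Ring

section NoZeroDivisors

variable [Semiring F] [NoZeroDivisors F]

section

variable {f g : MonoidAlgebra F (FreeMonoid α)}

theorem leadingWord_mul (hf : f ≠ 0) (hg : g ≠ 0) :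
    leadingWord (f * g) = leadingWord f * leadingWord g := by
  have hmem : leadingWord f * leadingWord g ∈ (f * g).coeff.support := by
    rw [Finsupp.mem_support_iff, coeff_mul_leadingWord]
    exact mul_ne_zero (Finsupp.mem_support_iff.1 (leadingWord_mem_support hf))
      (Finsupp.mem_support_iff.1 (leadingWord_mem_support hg))
  exact shortlexRank_injective <| le_antisymm
    (shortlexRank_le_of_mem_support_mul (leadingWord_mem_support (mul_ne_zero hf hg)))
    (shortlexRank_le_of_mem_support hmem)

theorem weight_mul (hf : f ≠ 0) (hg : g ≠ 0) :
    weight (f * g) = shortlexRank (leadingWord f * leadingWord g) + 1 := by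
  rw [weight_of_ne_zero (mul_ne_zero hf hg), leadingWord_mul hf hg]

theorem weight_mul_lt_weight_mul {f' : MonoidAlgebra F (FreeMonoid α)} (hf : f ≠ 0) (hg : g ≠ 0)
    (h : ∀ w ∈ f'.coeff.support, shortlexRank w < shortlexRank (leadingWord f)) :
    weight (f' * g) < weight (f * g) := by
  rw [weight_mul hf hg]
  by_cases hf' : f' = 0
  · simp [hf']
  rw [weight_mul hf' hg, add_lt_add_iff_right]
  exact shortlexRank_mul_lt_mul_right (h _ (leadingWord_mem_support hf')) _

theorem weight_mul_le_weight_mul {g' : MonoidAlgebra F (FreeMonoid α)} (hf : f ≠ 0) (hg : g ≠ 0)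
    (h : ∀ w ∈ g'.coeff.support, shortlexRank w ≤ shortlexRank (leadingWord g)) :
    weight (f * g') ≤ weight (f * g) := by
  rw [weight_mul hf hg]
  by_cases hg' : g' = 0
  · simp [hg']
  rw [weight_mul hf hg', add_le_add_iff_right]
  exact shortlexRank_mul_le_mul_left (h _ (leadingWord_mem_support hg')) _

end

variable {ι : Type*} [Fintype ι] {f g : ι → MonoidAlgebra F (FreeMonoid α)}

theorem exists_leadingWord_eq_mul_of_dotProduct_eq_zero (h : f ⬝ᵥ g = 0) {i₀ : ι}
    (hi₀ : f i₀ * g i₀ ≠ 0) :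
    ∃ i j, i ≠ j ∧ f i ≠ 0 ∧ g i ≠ 0 ∧ f j ≠ 0 ∧ g j ≠ 0 ∧ ∃ u,
      leadingWord (f i) = leadingWord (f j) * u ∧ leadingWord (g j) = u * leadingWord (g i) := by
  obtain ⟨i, j, hij, hi, hj, hlw⟩ := exists_ne_leadingWord_eq_of_sum_eq_zero h hi₀
  have hfi := left_ne_zero_of_mul hi
  have hgi := right_ne_zero_of_mul hi
  have hfj := left_ne_zero_of_mul hj
  have hgj := right_ne_zero_of_mul hj
  rw [leadingWord_mul hfi hgi, leadingWord_mul hfj hgj] at hlw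
  obtain ⟨u, ⟨hf, hg⟩ | ⟨hf, hg⟩⟩ := FreeMonoid.exists_eq_mul_of_mul_eq_mul hlw
  · exact ⟨i, j, hij, hfi, hgi, hfj, hgj, u, hf, hg⟩
  · exact ⟨j, i, hij.symm, hfj, hgj, hfi, hgi, u, hf, hg⟩

end NoZeroDivisors

section DivisionRing

variable [DivisionRing F] {ι : Type*} [Fintype ι] {f g : ι → MonoidAlgebra F (FreeMonoid α)}

theorem exists_pairWeight_lt [DecidableEq ι] (h : f ⬝ᵥ g = 0) {i₀ : ι} (hi₀ : f i₀ * g i₀ ≠ 0) :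
    ∃ i j, i ≠ j ∧ f i ≠ 0 ∧ f j ≠ 0 ∧ ∃ u c, leadingWord (f i) = leadingWord (f j) * u ∧
      pairWeight (f ᵥ* (1 + Matrix.single j i (-single u c)))
        ((1 + Matrix.single j i (single u c)) *ᵥ g) < pairWeight f g := by
  obtain ⟨i, j, hij, hfi, hgi, hfj, hgj, u, hfu, hgu⟩ :=
    exists_leadingWord_eq_mul_of_dotProduct_eq_zero h hi₀
  set c := ((f j).coeff (leadingWord (f j)))⁻¹ * (f i).coeff (leadingWord (f i))
  have hc : (f j).coeff (leadingWord (f j)) * c = (f i).coeff (leadingWord (f i)) :=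
    mul_inv_cancel_left₀ (Finsupp.mem_support_iff.1 (leadingWord_mem_support hfj)) _
  refine ⟨i, j, hij, hfi, hfj, u, c, hfu, ?_⟩
  rw [Matrix.vecMul_one_add_single, Matrix.one_add_single_mulVec]
  have hlt : weight ((f i - f j * single u c) * g i) < weight (f i * g i) :=
    weight_mul_lt_weight_mul hfi hgi fun _ =>
      shortlexRank_lt_of_mem_support_sub_mul_single hfu hc
  have hle : weight (f j * (g j + single u c * g i)) ≤ weight (f j * g j) :=
    weight_mul_le_weight_mul hfj hgj fun _ =>
      shortlexRank_le_of_mem_support_add_single_mul hgu c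
  refine Finset.sum_lt_sum (fun k _ => ?_) ⟨i, Finset.mem_univ _, ?_⟩
  · rcases eq_or_ne k i with rfl | hki
    · simpa [hij, sub_eq_add_neg] using hlt.le
    rcases eq_or_ne k j with rfl | hkj
    · simpa [hki] using hle
    · simp [hki, hkj]
  · simpa [hij, sub_eq_add_neg] using hlt

end DivisionRing

end LeadingWord

section Encoding

variable {F σ m n s : Type*}

section Semiring

variable [Semiring F]

variable (F σ m s) in
noncomputable def liftVars :
    MonoidAlgebra F (FreeMonoid σ) →+* MonoidAlgebra F (FreeMonoid (σ ⊕ m ⊕ s)) :=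
  mapDomainRingHom F (FreeMonoid.map Sum.inl)

theorem liftVars_single (u : FreeMonoid σ) (c : F) :
    liftVars F σ m s (single u c) = single (FreeMonoid.map Sum.inl u) c :=
  mapDomain_single

theorem coeff_liftVars (x : MonoidAlgebra F (FreeMonoid σ)) (w : FreeMonoid σ) :
    (liftVars F σ m s x).coeff (FreeMonoid.map Sum.inl w) = x.coeff w :=
  Finsupp.mapDomain_apply (FreeMonoid.map_injective Sum.inl_injective) _ _

theorem exists_of_mem_support_liftVars {x : MonoidAlgebra F (FreeMonoid σ)}
    {w : FreeMonoid (σ ⊕ m ⊕ s)} (hw : w ∈ (liftVars F σ m s x).coeff.support) :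
    ∃ w₀, w = FreeMonoid.map Sum.inl w₀ := by
  classical
  obtain ⟨w₀, -, rfl⟩ := Finset.mem_image.1 (Finsupp.mapDomain_support hw)
  exact ⟨w₀, rfl⟩

-- `colPoly s A i = ∑ⱼ tⱼ Aⱼᵢ` and `rowPoly m B i = ∑ₗ Bᵢₗ uₗ`, where `tⱼ = inr (inl j)` and
-- `uₗ = inr (inr l)` are letters beside the variables `σ`.
variable (s) in
noncomputable def colPoly [Fintype m] (A : Matrix m n (MonoidAlgebra F (FreeMonoid σ))) :
    n → MonoidAlgebra F (FreeMonoid (σ ⊕ m ⊕ s)) :=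
  (fun j => single (FreeMonoid.of (Sum.inr (Sum.inl j))) 1) ᵥ* A.map (liftVars F σ m s)

variable (m) in
noncomputable def rowPoly [Fintype s] (B : Matrix n s (MonoidAlgebra F (FreeMonoid σ))) :
    n → MonoidAlgebra F (FreeMonoid (σ ⊕ m ⊕ s)) :=
  B.map (liftVars F σ m s) *ᵥ fun l => single (FreeMonoid.of (Sum.inr (Sum.inr l))) 1

theorem colPoly_mul [Fintype m] [Fintype n] (A : Matrix m n (MonoidAlgebra F (FreeMonoid σ)))
    (M : Matrix n n (MonoidAlgebra F (FreeMonoid σ))) :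
    colPoly s (A * M) = colPoly s A ᵥ* M.map (liftVars F σ m s) := by
  rw [colPoly, colPoly, Matrix.map_mul, Matrix.vecMul_vecMul]

theorem mul_rowPoly [Fintype n] [Fintype s] (M : Matrix n n (MonoidAlgebra F (FreeMonoid σ)))
    (B : Matrix n s (MonoidAlgebra F (FreeMonoid σ))) :
    rowPoly m (M * B) = M.map (liftVars F σ m s) *ᵥ rowPoly m B := by
  rw [rowPoly, rowPoly, Matrix.map_mul, Matrix.mulVec_mulVec]

theorem colPoly_dotProduct_rowPoly [Fintype m] [Fintype n] [Fintype s]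
    {A : Matrix m n (MonoidAlgebra F (FreeMonoid σ))}
    {B : Matrix n s (MonoidAlgebra F (FreeMonoid σ))} (hAB : A * B = 0) :
    colPoly s A ⬝ᵥ rowPoly m B = 0 := by
  rw [colPoly, rowPoly, ← Matrix.dotProduct_mulVec, Matrix.mulVec_mulVec, ← Matrix.map_mul, hAB,
    Matrix.map_zero _ (map_zero _), Matrix.zero_mulVec, dotProduct_zero]

theorem coeff_colPoly [Fintype m] (A : Matrix m n (MonoidAlgebra F (FreeMonoid σ))) (i : n) (j : m)
    (w : FreeMonoid σ) :
    (colPoly s A i).coeff (FreeMonoid.of (Sum.inr (Sum.inl j)) * FreeMonoid.map Sum.inl w) =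
      (A j i).coeff w := by
  simp only [colPoly, Matrix.vecMul, dotProduct, Matrix.map_apply, coeff_sum,
    Finsupp.finsetSum_apply]
  rw [Finset.sum_eq_single j]
  · rw [coeff_single_mul_eq_mul_coeff _ fun _ _ => mul_right_inj _, one_mul, coeff_liftVars]
  · intro j' _ hj'
    exact coeff_single_mul_of_forall_mul_ne _ _ fun _ h => hj' (Sum.inl_injective
      (Sum.inr_injective (FreeMonoid.of_mul_inj.1 h).1))
  · simp

theorem coeff_rowPoly [Fintype s] (B : Matrix n s (MonoidAlgebra F (FreeMonoid σ))) (i : n) (l : s)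
    (w : FreeMonoid σ) :
    (rowPoly m B i).coeff (FreeMonoid.map Sum.inl w * FreeMonoid.of (Sum.inr (Sum.inr l))) =
      (B i l).coeff w := by
  simp only [rowPoly, Matrix.mulVec, dotProduct, Matrix.map_apply, coeff_sum,
    Finsupp.finsetSum_apply]
  rw [Finset.sum_eq_single l]
  · rw [coeff_mul_single_eq_coeff_mul _ fun _ _ => mul_left_inj _, mul_one, coeff_liftVars]
  · intro l' _ hl'
    exact coeff_mul_single_of_forall_mul_ne _ _ fun _ h => hl' (Sum.inr_injective
      (Sum.inr_injective (FreeMonoid.mul_of_inj.1 h).2))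
  · simp

theorem exists_of_mem_support_colPoly [Fintype m] {A : Matrix m n (MonoidAlgebra F (FreeMonoid σ))}
    {i : n}
    {w : FreeMonoid (σ ⊕ m ⊕ s)} (hw : w ∈ (colPoly s A i).coeff.support) :
    ∃ j w₀, w = FreeMonoid.of (Sum.inr (Sum.inl j)) * FreeMonoid.map Sum.inl w₀ := by
  classical
  simp only [colPoly, Matrix.vecMul, dotProduct, Matrix.map_apply, coeff_sum] at hw
  obtain ⟨j, -, hj⟩ := Finsupp.mem_support_finsetSum _ hw
  obtain ⟨w', hw', rfl⟩ := Finset.mem_image.1 (support_coeff_single_mul_subset _ _ _ hj)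
  obtain ⟨w₀, rfl⟩ := exists_of_mem_support_liftVars hw'
  exact ⟨j, w₀, rfl⟩

theorem eq_zero_of_colPoly_eq_zero [Fintype m] {A : Matrix m n (MonoidAlgebra F (FreeMonoid σ))}
    {i : n} (h : colPoly s A i = 0) (j : m) : A j i = 0 := by
  ext w
  rw [← coeff_colPoly (s := s), h]
  rfl

theorem eq_zero_of_rowPoly_eq_zero [Fintype s] {B : Matrix n s (MonoidAlgebra F (FreeMonoid σ))}
    {i : n} (h : rowPoly m B i = 0) (l : s) : B i l = 0 := by
  ext w
  rw [← coeff_rowPoly (m := m), h]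
  rfl

theorem exists_map_eq_of_leadingWord_colPoly_eq_mul [Fintype σ] [Fintype m] [Fintype s]
    {A : Matrix m n (MonoidAlgebra F (FreeMonoid σ))} {i j : n} (hi : colPoly s A i ≠ 0)
    (hj : colPoly s A j ≠ 0) {u : FreeMonoid (σ ⊕ m ⊕ s)}
    (h : leadingWord (colPoly s A i) = leadingWord (colPoly s A j) * u) :
    ∃ u₀, FreeMonoid.map Sum.inl u₀ = u := by
  obtain ⟨a, w₁, hw₁⟩ := exists_of_mem_support_colPoly (leadingWord_mem_support hi)
  obtain ⟨b, w₂, hw₂⟩ := exists_of_mem_support_colPoly (leadingWord_mem_support hj)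
  rw [hw₁, hw₂, mul_assoc] at h
  exact FreeMonoid.exists_map_eq_of_map_eq_mul (FreeMonoid.of_mul_inj.1 h).2

end Semiring

section DivisionRing

variable [DivisionRing F]

theorem exists_pairWeight_colPoly_lt [Fintype σ] [Fintype m] [Fintype n] [DecidableEq n]
    [Fintype s] {A : Matrix m n (MonoidAlgebra F (FreeMonoid σ))}
    {B : Matrix n s (MonoidAlgebra F (FreeMonoid σ))} (hAB : A * B = 0) {i₀ : n}
    (hi₀ : colPoly s A i₀ * rowPoly m B i₀ ≠ 0) :
    ∃ M M' : Matrix n n (MonoidAlgebra F (FreeMonoid σ)), M * M' = 1 ∧ M' * M = 1 ∧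
      pairWeight (colPoly s (A * M)) (rowPoly m (M' * B)) <
        pairWeight (colPoly s A) (rowPoly m B) := by
  obtain ⟨i, j, hij, hi, hj, u, c, hu, hlt⟩ :=
    exists_pairWeight_lt (colPoly_dotProduct_rowPoly hAB) hi₀
  obtain ⟨u₀, rfl⟩ := exists_map_eq_of_leadingWord_colPoly_eq_mul hi hj hu
  refine ⟨1 + Matrix.single j i (-single u₀ c), 1 + Matrix.single j i (single u₀ c), ?_,
    Matrix.one_add_single_mul_one_add_single_neg hij _, ?_⟩
  · simpa using Matrix.one_add_single_mul_one_add_single_neg hij (-single u₀ c)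
  · rw [colPoly_mul, mul_rowPoly]
    simpa [Matrix.map_add, liftVars_single] using hlt

theorem trivializable_of_mul_eq_zero [Fintype σ] [Fintype m] [Fintype n] [DecidableEq n]
    [Fintype s] {A : Matrix m n (MonoidAlgebra F (FreeMonoid σ))}
    {B : Matrix n s (MonoidAlgebra F (FreeMonoid σ))} (hAB : A * B = 0) :
    A.Trivializable B := by
  induction hN : pairWeight (colPoly s A) (rowPoly m B) using Nat.strong_induction_on
    generalizing A B with
  | _ N ih =>
  by_cases h : ∀ i, colPoly s A i * rowPoly m B i = 0
  · refine Matrix.Trivializable.of_forall fun i => ?_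
    rcases mul_eq_zero.1 (h i) with h | h
    · exact Or.inl (eq_zero_of_colPoly_eq_zero h)
    · exact Or.inr (eq_zero_of_rowPoly_eq_zero h)
  · obtain ⟨i₀, hi₀⟩ := not_forall.1 h
    obtain ⟨M, M', hMM', hM'M, hlt⟩ := exists_pairWeight_colPoly_lt hAB hi₀
    refine Matrix.Trivializable.of_mul_mul hMM' hM'M (ih _ (hN ▸ hlt) ?_ rfl)
    rw [Matrix.mul_assoc, ← Matrix.mul_assoc M, hMM', Matrix.one_mul, hAB]

end DivisionRing

end Encoding

end MonoidAlgebra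

/-- Matrix Product Trivialization: if `A · B = 0` over `F⟨X⟩` then there
is a unit `P` (with two-sided inverse `V`) such that for each index `i` either the `i`-th
column of `A · P` is zero or the `i`-th row of `P⁻¹ · B` is zero. -/
theorem matrix_product_trivialization {F : Type*} [Field F] {k m p s : ℕ}
    (A : Matrix (Fin m) (Fin p) (FreeAlgebra F (Fin k)))
    (B : Matrix (Fin p) (Fin s) (FreeAlgebra F (Fin k)))
    (hAB : A * B = 0) :
    ∃ P V : Matrix (Fin p) (Fin p) (FreeAlgebra F (Fin k)),
      P * V = 1 ∧ V * P = 1 ∧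
      ∀ i : Fin p, (∀ j, (A * P) j i = 0) ∨ (∀ j, (V * B) i j = 0) := by
  show A.Trivializable B
  let e := (FreeAlgebra.equivMonoidAlgebraFreeMonoid (R := F) (X := Fin k)).toRingEquiv
  have h : (A.map e).Trivializable (B.map e) := MonoidAlgebra.trivializable_of_mul_eq_zero <| by
    rw [← Matrix.map_mul, hAB, Matrix.map_zero _ (map_zero e)]
  simpa [Function.comp_def] using h.map e.symm
end

section
/- Let L = A_0 + A_1x_1 + ⋯ + A_nx_n ∈ F⟨X⟩^{d×d} be a right monic linear matrix, let ℓ ≥ 1, let M_1,…,M_n ∈ F^{ℓ×ℓ} be scalar matrices, and let L' = A_0 ⊗ I_ℓ + Σ_{i=1}^n A_i ⊗ (Y_i + M_i) ∈ F⟨Y⟩^{dℓ×dℓ} be the dilated linear matrix, where Y_i is the ℓ×ℓ matrix whose (j,k)-th entry is the noncommuting variable y_{i,j,k}. Then L' is a right monic linear matrix in the variables y_{i,j,k}; moreover, if its constant term A_0 ⊗ I_ℓ + Σ_{i=1}^n A_i ⊗ M_i is an invertible scalar matrix, then L' is full. -/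
open Matrix BigOperators

/-!
The coefficient matrices of the dilation are `A i ⊗ E_{jk}`. A row vector annihilated by all of
them has every `ℓ`-slice annihilated by every `A i`, so it vanishes by right monicity of `A`;
this is full row rank of the dilated coefficients. Evaluating all variables at `0` sends the
dilation to its constant term, and a factorization through a smaller size would bound the rank
of that invertible scalar matrix.
-/

open scoped Kronecker

theorem Matrix.rank_eq_card_iff_linearIndependent_row {F m n : Type*} [Field F] [Fintype m]
    [Fintype n] (B : Matrix m n F) :
    B.rank = Fintype.card m ↔ LinearIndependent F B.row := by
  rw [B.rank_eq_finrank_span_row, linearIndependent_iff_card_eq_finrank_span, Set.finrank, eq_comm]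

theorem rightMonicCoeffs_iff {F σ α : Type*} [Field F] [Fintype σ] [Fintype α]
    (A : σ → Matrix α α F) :
    RightMonicCoeffs A ↔ ∀ v : α → F, (∀ i, v ᵥ* A i = 0) → v = 0 := by
  rw [RightMonicCoeffs, Matrix.rank_eq_card_iff_linearIndependent_row,
    Fintype.linearIndependent_iff]
  refine forall_congr' fun v => ?_
  have : ∑ j, v j • (Matrix.of fun (j : α) (p : σ × α) => A p.1 j p.2).row j = 0 ↔
      ∀ i, v ᵥ* A i = 0 := by
    simp [funext_iff, Matrix.vecMul, dotProduct, Finset.sum_apply, Prod.forall]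
  rw [this, funext_iff]; rfl

theorem RightMonicCoeffs.kronecker_single {F σ α ι : Type*} [Field F] [Fintype σ] [Fintype α]
    [Fintype ι] [DecidableEq ι] {A : σ → Matrix α α F} (hA : RightMonicCoeffs A) :
    RightMonicCoeffs fun s : σ × ι × ι => A s.1 ⊗ₖ Matrix.single s.2.1 s.2.2 (1 : F) := by
  rw [rightMonicCoeffs_iff] at hA ⊢
  intro v hv
  funext ⟨r, j⟩
  have hslice : ∀ i, (fun r => v (r, j)) ᵥ* A i = 0 := fun i => funext fun a => by
    simpa [Matrix.vecMul, dotProduct, Matrix.single_apply, Fintype.sum_prod_type]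
      using congrFun (hv (i, j, j)) (a, j)
  exact congrFun (hA _ hslice) r

theorem dilate_eq_linMatrix {F : Type*} [Field F] {n d : ℕ}
    (A0 : Matrix (Fin d) (Fin d) F) (A : Fin n → Matrix (Fin d) (Fin d) F) (ℓ : ℕ)
    (M : Fin n → Matrix (Fin ℓ) (Fin ℓ) F) :
    dilate A0 A ℓ M = linMatrix (A0 ⊗ₖ 1 + ∑ i, A i ⊗ₖ M i)
      fun s => A s.1 ⊗ₖ Matrix.single s.2.1 s.2.2 (1 : F) := by
  ext p q
  simp only [dilate, linMatrix, Matrix.of_apply, Matrix.add_apply, Matrix.sum_apply,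
    Matrix.kroneckerMap_apply, Matrix.one_apply, Fintype.sum_prod_type]
  congr 1
  refine Finset.sum_congr rfl fun i _ => ?_
  simp [Matrix.single_apply, ite_and, ite_smul]

theorem linMatrix_map_lift_zero {F σ α β : Type*} [Field F] [Fintype σ]
    (A0 : Matrix α β F) (A : σ → Matrix α β F) :
    (linMatrix A0 A).map (FreeAlgebra.lift F 0) = A0 := by
  ext j k
  simp [linMatrix]

theorem IsFullMat.of_isUnit_map {R K α : Type*} [Semiring R] [CommSemiring K]
    [StrongRankCondition K] [Fintype α] [DecidableEq α] (f : R →+* K) {M : Matrix α α R}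
    (hM : IsUnit (M.map f)) : IsFullMat M := by
  rintro ⟨e, he, M₁, M₂, rfl⟩
  rw [Matrix.map_mul] at hM
  have : Fintype.card α ≤ e := calc
    Fintype.card α = (M₁.map f * M₂.map f).rank := (Matrix.rank_of_isUnit _ hM).symm
    _ ≤ (M₂.map f).rank := Matrix.rank_mul_le_right _ _
    _ ≤ Fintype.card (Fin e) := Matrix.rank_le_card_height _
    _ = e := Fintype.card_fin e
  omega

theorem isFullMat_linMatrix {F σ α : Type*} [Field F] [Fintype σ] [Fintype α] [DecidableEq α]
    {A0 : Matrix α α F} (hA0 : IsUnit A0) (A : σ → Matrix α α F) :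
    IsFullMat (linMatrix A0 A) :=
  IsFullMat.of_isUnit_map
    ((FreeAlgebra.lift F 0 : FreeAlgebra F σ →ₐ[F] F) : FreeAlgebra F σ →+* F) <| by
      rwa [AlgHom.coe_toRingHom, linMatrix_map_lift_zero]

theorem dilated_right_monic_and_full_general {F : Type*} [Field F] {n d ℓ : ℕ}
    (A0 : Matrix (Fin d) (Fin d) F) (A : Fin n → Matrix (Fin d) (Fin d) F)
    (hmonic : RightMonicCoeffs A)
    (M : Fin n → Matrix (Fin ℓ) (Fin ℓ) F) :
    IsRightMonicLinear (dilate A0 A ℓ M) ∧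
    (IsUnit (Matrix.of fun p q : Fin d × Fin ℓ =>
        A0 p.1 q.1 * (if p.2 = q.2 then (1 : F) else 0) +
          ∑ i, A i p.1 q.1 * M i p.2 q.2) →
      IsFullMat (dilate A0 A ℓ M)) := by
  rw [dilate_eq_linMatrix]
  refine ⟨⟨_, _, rfl, hmonic.kronecker_single⟩, fun hunit => isFullMat_linMatrix ?_ _⟩
  convert hunit using 1
  ext p q
  simp [Matrix.one_apply, Matrix.sum_apply]

/-- the dilated linear matrix `L' = A0 ⊗ I_ℓ + ∑ A_i ⊗ (Y_i + M_i)` of a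
right monic linear matrix is right monic in the variables `y_{i,j,k}`; and if its
constant term `A0 ⊗ I_ℓ + ∑ A_i ⊗ M_i` is invertible then `L'` is full. -/
theorem dilated_right_monic_and_full {F : Type*} [Field F] {n d ℓ : ℕ} (hl : 0 < ℓ)
    (A0 : Matrix (Fin d) (Fin d) F) (A : Fin n → Matrix (Fin d) (Fin d) F)
    (hmonic : RightMonicCoeffs A)
    (M : Fin n → Matrix (Fin ℓ) (Fin ℓ) F) :
    IsRightMonicLinear (dilate A0 A ℓ M) ∧
    (IsUnit (Matrix.of fun p q : Fin d × Fin ℓ =>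
        A0 p.1 q.1 * (if p.2 = q.2 then (1 : F) else 0) +
          ∑ i, A i p.1 q.1 * M i p.2 q.2) →
      IsFullMat (dilate A0 A ℓ M)) :=
  dilated_right_monic_and_full_general A0 A hmonic M
end

section
/- In the free noncommutative polynomial ring F⟨x,y⟩ in two noncommuting variables x and y, the polynomials 1 + xy and 1 + yx are stable associates: there exist a positive integer t and units P, Q ∈ F⟨x,y⟩^{(1+t)×(1+t)} such that (1+xy) ⊕ I_t = P·((1+yx) ⊕ I_t)·Q. -/
open Matrix BigOperators

/-!
Over any ring, `M = [[1, -a], [b, 1]]` is reduced by one row and one column transvection both to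
`diag(1 + ab, 1) = U(a) M L(-b)` and to `diag(1, 1 + ba) = L(-b) M U(a)`, where
`U(c) = [[1, c], [0, 1]]` and `L(c) = [[1, 0], [c, 1]]`; swapping the two coordinates finishes.
-/

section TwoByTwo

variable {R : Type*} [Ring R]

lemma Matrix.isUnit_upper_fin_two (c : R) : IsUnit !![(1 : R), c; 0, 1] :=
  isUnit_iff_exists.2 ⟨!![1, -c; 0, 1],
    by simp [one_fin_two], by simp [one_fin_two]⟩

lemma Matrix.isUnit_lower_fin_two (c : R) : IsUnit !![(1 : R), 0; c, 1] :=
  isUnit_iff_exists.2 ⟨!![1, 0; -c, 1],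
    by simp [one_fin_two], by simp [one_fin_two]⟩

lemma Matrix.isUnit_swap_fin_two : IsUnit !![(0 : R), 1; 1, 0] :=
  isUnit_iff_exists.2 ⟨!![0, 1; 1, 0],
    by simp [one_fin_two], by simp [one_fin_two]⟩

lemma Matrix.diag_one_add_mul_fin_two_eq (a b : R) :
    !![1 + a * b, 0; 0, 1] =
      (!![1, a; 0, 1] * !![1, 0; b, 1] * !![0, 1; 1, 0]) * !![1 + b * a, 0; 0, 1] *
        (!![0, 1; 1, 0] * !![1, -a; 0, 1] * !![1, 0; -b, 1]) := by
  simp only [mul_fin_two]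
  ext i j
  fin_cases i <;> fin_cases j <;> simp <;> noncomm_ring

theorem Matrix.exists_isUnit_diag_one_add_mul_fin_two_eq (a b : R) :
    ∃ P Q : Matrix (Fin 2) (Fin 2) R, IsUnit P ∧ IsUnit Q ∧
      !![1 + a * b, 0; 0, 1] = P * !![1 + b * a, 0; 0, 1] * Q :=
  ⟨_, _, ((isUnit_upper_fin_two a).mul (isUnit_lower_fin_two b)).mul isUnit_swap_fin_two,
    (isUnit_swap_fin_two.mul (isUnit_upper_fin_two (-a))).mul (isUnit_lower_fin_two (-b)),
    diag_one_add_mul_fin_two_eq a b⟩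

end TwoByTwo

lemma oplusId_toMat1_one {R : Type*} [Semiring R] (f : R) :
    oplusId (toMat1 f) 1 = !![f, 0; 0, 1] := by
  ext i j
  fin_cases i <;> fin_cases j <;> rfl

/-- in `F⟨x,y⟩` the polynomials `1 + xy` and `1 + yx` are stable
associates. -/
theorem one_add_xy_stable_assoc {F : Type*} [Field F] :
    ∃ (t : ℕ) (_ : 0 < t)
      (P Q : Matrix (Fin (1 + t)) (Fin (1 + t)) (FreeAlgebra F (Fin 2))),
      IsUnit P ∧ IsUnit Q ∧
      oplusId (toMat1 (1 + FreeAlgebra.ι F (0 : Fin 2) * FreeAlgebra.ι F (1 : Fin 2))) t =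
        P * oplusId (toMat1 (1 + FreeAlgebra.ι F (1 : Fin 2) * FreeAlgebra.ι F (0 : Fin 2))) t
          * Q := by
  obtain ⟨P, Q, hP, hQ, h⟩ := Matrix.exists_isUnit_diag_one_add_mul_fin_two_eq
    (FreeAlgebra.ι F (0 : Fin 2)) (FreeAlgebra.ι F 1)
  refine ⟨1, one_pos, P, Q, hP, hQ, ?_⟩
  rw [oplusId_toMat1_one, oplusId_toMat1_one]
  exact h
end
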